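/- Let A be a Banach space, 1 ≤ p < ∞, and a = (a_i) a sequence in A whose dual shadow {(φ(a_i))_i : φ ∈ A*_1} is bounded in ℓ^p. Set a_n = (a_1, …, a_n, 0, 0, …). Then the dual shadow of a is totally bounded in ℓ^p if and only if |||a_n − a|||_p → 0, where |||b|||_p = sup_{φ ∈ A*_1} ‖(φ(b_i))_i‖_p. -/

import Mathlib

/-! Truncating the shadow of `a` is truncating the sequence, so `|||aₙ − a|||_p → 0` says that the
tails of the elements of the shadow tend to `0` uniformly. In `ℓ^p` with `p < ∞` this is the
classical characterisation of totally bounded sets among bounded ones: a finite `ε`-net makes the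
tails of all elements small once those of the net are, since cutting off a tail is `1`-Lipschitz;
conversely, if all tails beyond `n` are small, every element is close to its first `n` coordinates,
which range over a bounded subset of a finite-dimensional space. -/

open NormedSpace Filter Topology
open scoped ENNReal

/-- The dual shadow of a sequence `a` in `A`, viewed as a subset of `ℓ^p`. -/
def dualShadow {A : Type*} [NormedAddCommGroup A] [NormedSpace ℂ A] (p : ℝ≥0∞)
    (a : ℕ → A) : Set (lp (fun _ : ℕ => ℂ) p) :=
  {x | ∃ φ : StrongDual ℂ A, ‖φ‖ ≤ 1 ∧ ∀ i, x i = φ (a i)}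

section Metric

variable {α β ι : Type*} [PseudoMetricSpace α] [PseudoMetricSpace β]

theorem totallyBounded_of_forall_exists_totallyBounded_near {s : Set α}
    (h : ∀ ε > 0, ∃ t : Set α, TotallyBounded t ∧ ∀ x ∈ s, ∃ y ∈ t, dist x y < ε) :
    TotallyBounded s := by
  refine Metric.totallyBounded_iff.2 fun ε hε => ?_
  obtain ⟨t, ht, hst⟩ := h (ε / 2) (half_pos hε)
  obtain ⟨u, hu, htu⟩ := Metric.totallyBounded_iff.1 ht (ε / 2) (half_pos hε)
  refine ⟨u, hu, fun x hx => ?_⟩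
  obtain ⟨y, hyt, hxy⟩ := hst x hx
  obtain ⟨z, hzu, hyz⟩ := Set.mem_iUnion₂.1 (htu hyt)
  refine Set.mem_iUnion₂.2 ⟨z, hzu, ?_⟩
  calc dist x z ≤ dist x y + dist y z := dist_triangle x y z
    _ < ε / 2 + ε / 2 := add_lt_add hxy hyz
    _ = ε := add_halves ε

theorem TotallyBounded.tendstoUniformlyOn_of_lipschitzWith {F : ι → α → β} {f : α → β}
    {K : NNReal} {l : Filter ι} {s : Set α} (hs : TotallyBounded s)
    (hF : ∀ i, LipschitzWith K (F i)) (hf : LipschitzWith K f)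
    (hlim : ∀ x, Tendsto (fun i => F i x) l (𝓝 (f x))) :
    TendstoUniformlyOn F f l s := by
  refine Metric.tendstoUniformlyOn_iff.2 fun ε hε => ?_
  obtain ⟨δ, hδ, hKδ⟩ := exists_pos_mul_lt (div_pos hε four_pos) K
  obtain ⟨u, hu, hsu⟩ := Metric.totallyBounded_iff.1 hs δ hδ
  have hnet : ∀ᶠ i in l, ∀ z ∈ u, dist (f z) (F i z) < ε / 2 :=
    hu.eventually_all.2 fun z _ => (Metric.tendsto_nhds.1 (hlim z) _ (half_pos hε)).mono
      fun i hi => by rw [dist_comm]; exact hi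
  filter_upwards [hnet] with i hi x hx
  obtain ⟨z, hzu, hxz⟩ := Set.mem_iUnion₂.1 (hsu hx)
  have hKxz : K * dist x z ≤ K * δ := mul_le_mul_of_nonneg_left (Metric.mem_ball.1 hxz).le K.2
  calc dist (f x) (F i x) ≤ dist (f x) (f z) + dist (f z) (F i z) + dist (F i z) (F i x) :=
        dist_triangle4 _ _ _ _
    _ ≤ K * dist x z + dist (f z) (F i z) + K * dist z x :=
        add_le_add_three (hf.dist_le_mul x z) le_rfl ((hF i).dist_le_mul z x)
    _ < ε := by rw [dist_comm z x]; linarith [hi z hzu]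

end Metric

theorem tendsto_sSup_norm_image_iff_tendstoUniformlyOn {ι α G : Type*} [SeminormedAddGroup G]
    {F : ι → α → G} {l : Filter ι} {s : Set α} (hbdd : ∀ i, BddAbove (norm '' (F i '' s))) :
    Tendsto (fun i => sSup (norm '' (F i '' s))) l (𝓝 0) ↔ TendstoUniformlyOn F 0 l s := by
  have hnonneg : ∀ i, 0 ≤ sSup (norm '' (F i '' s)) := fun i =>
    Real.sSup_nonneg (by rintro _ ⟨_, _, rfl⟩; exact norm_nonneg _)
  simp only [Metric.tendsto_nhds, Metric.tendstoUniformlyOn_iff, Real.dist_0_eq_abs,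
    abs_of_nonneg (hnonneg _), Pi.zero_apply, dist_zero_left]
  refine ⟨fun h ε hε => (h ε hε).mono fun i hi x hx => ?_, fun h ε hε => ?_⟩
  · exact (le_csSup (hbdd i) ⟨F i x, Set.mem_image_of_mem _ hx, rfl⟩).trans_lt hi
  · refine (h (ε / 2) (half_pos hε)).mono fun i hi => ?_
    refine (Real.sSup_le ?_ (half_pos hε).le).trans_lt (half_lt_self hε)
    rintro _ ⟨_, ⟨x, hx, rfl⟩, rfl⟩
    exact (hi x hx).le

namespace lp

variable {E : Type*} [NormedAddCommGroup E] {p : ℝ≥0∞}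

def tail (p : ℝ≥0∞) (n : ℕ) (f : lp (fun _ : ℕ => E) p) : lp (fun _ : ℕ => E) p :=
  ⟨fun i => if i < n then 0 else f i, (lp.memℓp f).mono' fun i => by split_ifs <;> simp⟩

@[simp]
theorem tail_apply (n : ℕ) (f : lp (fun _ : ℕ => E) p) (i : ℕ) :
    tail p n f i = if i < n then 0 else f i :=
  rfl

theorem tail_sub (n : ℕ) (f g : lp (fun _ : ℕ => E) p) :
    tail p n (f - g) = tail p n f - tail p n g := by
  ext i
  simp only [tail_apply, coeFn_sub, Pi.sub_apply]
  split_ifs <;> simp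

theorem tail_eq_sub_sum_single (n : ℕ) (f : lp (fun _ : ℕ => E) p) :
    tail p n f = f - ∑ i ∈ Finset.range n, lp.single p i (f i) := by
  ext j
  simp only [tail_apply, coeFn_sub, coeFn_sum, lp.coeFn_single, Pi.sub_apply, Finset.sum_apply,
    Finset.sum_pi_single, Finset.mem_range]
  split_ifs <;> simp

variable [Fact (1 ≤ p)]

theorem norm_tail_le (n : ℕ) (f : lp (fun _ : ℕ => E) p) : ‖tail p n f‖ ≤ ‖f‖ :=
  lp.norm_mono (zero_lt_one.trans_le Fact.out).ne' fun i => by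
    rw [tail_apply]; split_ifs <;> simp

theorem lipschitzWith_one_tail (n : ℕ) : LipschitzWith 1 (tail (E := E) p n) :=
  LipschitzWith.of_dist_le_mul fun f g => by
    simpa only [dist_eq_norm, ← tail_sub, NNReal.coe_one, one_mul] using norm_tail_le n (f - g)

theorem tendsto_tail (hp : p ≠ ⊤) (f : lp (fun _ : ℕ => E) p) :
    Tendsto (fun n => tail p n f) atTop (𝓝 0) := by
  have h := (tendsto_const_nhds (x := f)).sub (lp.hasSum_single hp f).tendsto_sum_nat
  rw [sub_self] at h
  simpa only [tail_eq_sub_sum_single] using h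

theorem totallyBounded_image_sub_tail [ProperSpace E] {S : Set (lp (fun _ : ℕ => E) p)}
    (hS : Bornology.IsBounded S) (n : ℕ) : TotallyBounded ((fun f => f - tail p n f) '' S) := by
  set restrict : lp (fun _ : ℕ => E) p → Fin n → E := fun f i => f i
  set extend : (Fin n → E) → lp (fun _ : ℕ => E) p := fun v => ∑ i : Fin n, lp.single p i (v i)
  have hhead : (fun f => f - tail p n f) = extend ∘ restrict := by
    ext1 f
    rw [Function.comp_apply, tail_eq_sub_sum_single, sub_sub_cancel]
    exact (Fin.sum_univ_eq_sum_range (fun i => lp.single p i (f i)) n).symm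
  have hrestrict : Bornology.IsBounded (restrict '' S) := by
    obtain ⟨C, hC⟩ := isBounded_iff_forall_norm_le.1 hS
    refine isBounded_iff_forall_norm_le.2 ⟨max C 0, ?_⟩
    rintro _ ⟨f, hf, rfl⟩
    refine (pi_norm_le_iff_of_nonneg (le_max_right C 0)).2 fun i => ?_
    exact ((norm_apply_le_norm (zero_lt_one.trans_le Fact.out).ne' f i).trans
      (hC f hf)).trans (le_max_left C 0)
  have hextend : Continuous extend :=
    continuous_finsetSum _ fun i _ => (lp.isometry_single (i : ℕ)).continuous.comp
      (continuous_apply i)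
  rw [hhead, Set.image_comp]
  exact ((hrestrict.isCompact_closure.image hextend).totallyBounded).subset
    (Set.image_mono subset_closure)

theorem _root_.TotallyBounded.tendstoUniformlyOn_lp_tail (hp : p ≠ ⊤)
    {S : Set (lp (fun _ : ℕ => E) p)} (hS : TotallyBounded S) :
    TendstoUniformlyOn (fun n => tail p n) 0 atTop S :=
  hS.tendstoUniformlyOn_of_lipschitzWith lipschitzWith_one_tail (LipschitzWith.const' 0)
    (tendsto_tail hp)

theorem totallyBounded_of_tendstoUniformlyOn_tail [ProperSpace E]
    {S : Set (lp (fun _ : ℕ => E) p)} (hS : Bornology.IsBounded S)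
    (htail : TendstoUniformlyOn (fun n => tail p n) 0 atTop S) : TotallyBounded S := by
  refine totallyBounded_of_forall_exists_totallyBounded_near fun ε hε => ?_
  obtain ⟨n, hn⟩ := (Metric.tendstoUniformlyOn_iff.1 htail ε hε).exists
  refine ⟨_, totallyBounded_image_sub_tail hS n, fun f hf => ⟨_, ⟨f, hf, rfl⟩, ?_⟩⟩
  rw [dist_eq_norm, sub_sub_cancel]
  simpa only [Pi.zero_apply, dist_zero_left] using hn f hf

theorem totallyBounded_iff_tendstoUniformlyOn_tail [ProperSpace E] (hp : p ≠ ⊤)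
    {S : Set (lp (fun _ : ℕ => E) p)} (hS : Bornology.IsBounded S) :
    TotallyBounded S ↔ TendstoUniformlyOn (fun n => tail p n) 0 atTop S :=
  ⟨(·.tendstoUniformlyOn_lp_tail hp), totallyBounded_of_tendstoUniformlyOn_tail hS⟩

end lp

theorem dualShadow_truncate_eq_image_tail {A : Type*} [NormedAddCommGroup A] [NormedSpace ℂ A]
    {p : ℝ≥0∞} {a : ℕ → A} (hmem : ∀ φ : StrongDual ℂ A, ‖φ‖ ≤ 1 → Memℓp (fun i => φ (a i)) p)
    (n : ℕ) :
    dualShadow p (fun i => if i < n then 0 else a i) = lp.tail p n '' dualShadow p a := by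
  ext x
  constructor
  · rintro ⟨φ, hφ, hx⟩
    refine ⟨⟨fun i => φ (a i), hmem φ hφ⟩, ⟨φ, hφ, fun _ => rfl⟩, ?_⟩
    ext i
    rw [lp.tail_apply, hx i, apply_ite φ, map_zero]
  · rintro ⟨y, ⟨φ, hφ, hy⟩, rfl⟩
    exact ⟨φ, hφ, fun i => by rw [lp.tail_apply, hy i, apply_ite φ, map_zero]⟩

theorem totallyBounded_shadow_iff_truncations_converge_general {A : Type*}
    [NormedAddCommGroup A] [NormedSpace ℂ A]
    (p : ℝ≥0∞) [Fact (1 ≤ p)] (hp' : p ≠ ⊤) (a : ℕ → A)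
    (hmem : ∀ φ : StrongDual ℂ A, ‖φ‖ ≤ 1 → Memℓp (fun i => φ (a i)) p)
    (hbdd : BddAbove (norm '' dualShadow p a)) :
    TotallyBounded (dualShadow p a) ↔
      Tendsto (fun n : ℕ => sSup (norm '' dualShadow p (fun i => if i < n then 0 else a i)))
        atTop (𝓝 0) := by
  obtain ⟨M, hM⟩ := hbdd
  have hbounded : Bornology.IsBounded (dualShadow p a) :=
    isBounded_iff_forall_norm_le.2 ⟨M, fun x hx => hM ⟨x, hx, rfl⟩⟩
  have htails : ∀ n, BddAbove (norm '' (lp.tail p n '' dualShadow p a)) := fun n =>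
    ⟨M, by rintro _ ⟨_, ⟨x, hx, rfl⟩, rfl⟩; exact (lp.norm_tail_le n x).trans (hM ⟨x, hx, rfl⟩)⟩
  simp only [dualShadow_truncate_eq_image_tail hmem]
  rw [tendsto_sSup_norm_image_iff_tendstoUniformlyOn htails]
  exact lp.totallyBounded_iff_tendstoUniformlyOn_tail hp' hbounded

/-- For `1 ≤ p < ∞` and a sequence `a` with bounded dual shadow, the dual shadow of `a`
is totally bounded in `ℓ^p` iff `|||aₙ − a|||_p → 0`, where `aₙ` is the `n`-th
truncation of `a` (so `aₙ − a` is the tail of `a`). -/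
theorem totallyBounded_shadow_iff_truncations_converge {A : Type*}
    [NormedAddCommGroup A] [NormedSpace ℂ A] [CompleteSpace A]
    (p : ℝ≥0∞) [Fact (1 ≤ p)] (hp' : p ≠ ⊤) (a : ℕ → A)
    (hmem : ∀ φ : StrongDual ℂ A, ‖φ‖ ≤ 1 → Memℓp (fun i => φ (a i)) p)
    (hbdd : BddAbove (norm '' dualShadow p a)) :
    TotallyBounded (dualShadow p a) ↔
      Tendsto (fun n : ℕ => sSup (norm '' dualShadow p (fun i => if i < n then 0 else a i)))
        atTop (𝓝 0) :=
  totallyBounded_shadow_iff_truncations_converge_general p hp' a hmem hbdd
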